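/- arXiv:2102.05969 — 9 statements merged into one kernel-verified Lean document; each statement's English description precedes it below -/
import Mathlib

section
/- Let E be a real Banach space, let X : E → E be a vector field, and let γ : ℝ → E be differentiable with deriv γ t = X (γ t) for all t ∈ ℝ (an integral curve of X). Let s ∈ ℕ, let f : Fin s → E → ℝ be functions each differentiable on E, and let h : Fin s → Fin s → E → ℝ be such that for each i, j the function t ↦ h j i (γ t) is continuous on ℝ. Assume the Darboux-family relation: for every j ∈ Fin s and every x ∈ E, fderiv ℝ (f j) x (X x) = Σ_{i} (h j i x) * (f i x). If f i (γ 0) = 0 for every i ∈ Fin s, then f i (γ t) = 0 for every i ∈ Fin s and every t ∈ ℝ. -/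
open Set Matrix

/-- On a compact time interval containing `t` and `t₀` the operators `A u` are uniformly bounded,
hence uniformly Lipschitz, so uniqueness of solutions compares `y` with the zero solution. -/
theorem linear_ODE_solution_eq_zero {F : Type*} [NormedAddCommGroup F] [NormedSpace ℝ F]
    {A : ℝ → F →L[ℝ] F} (hA : Continuous A) {y : ℝ → F}
    (hy : ∀ t, HasDerivAt y (A t (y t)) t) {t₀ : ℝ} (hy₀ : y t₀ = 0) : y = 0 := by
  funext t
  obtain ⟨a, b, ht, ht₀⟩ : ∃ a b, t ∈ Ioo a b ∧ t₀ ∈ Ioo a b :=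
    ⟨min t t₀ - 1, max t t₀ + 1, by grind, by grind⟩
  obtain ⟨C, hC⟩ :=
    (isCompact_Icc (a := a) (b := b)).exists_bound_of_continuousOn hA.continuousOn
  have hLip : ∀ u ∈ Ioo a b, LipschitzOnWith C.toNNReal (A u) univ := fun u hu =>
    have hAu : ‖A u‖₊ ≤ C.toNNReal :=
      NNReal.le_toNNReal_of_coe_le (hC u (Ioo_subset_Icc_self hu))
    ((A u).lipschitz.weaken hAu).lipschitzOnWith
  have hzero : ∀ u, HasDerivAt (0 : ℝ → F) (A u 0) u := fun u => by
    rw [map_zero]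
    exact hasDerivAt_const u 0
  exact ODE_solution_unique_of_mem_Ioo hLip ht₀ (fun u _ => ⟨hy u, mem_univ _⟩)
    (fun u _ => ⟨hzero u, mem_univ _⟩) hy₀ ht

theorem Matrix.linear_ODE_solution_eq_zero {ι : Type*} [Fintype ι]
    {M : ℝ → Matrix ι ι ℝ} (hM : Continuous M) {y : ℝ → ι → ℝ}
    (hy : ∀ t, HasDerivAt y (M t *ᵥ y t) t) {t₀ : ℝ} (hy₀ : y t₀ = 0) : y = 0 := by
  have hA : Continuous fun t => LinearMap.toContinuousLinearMap (M t).mulVecLin := by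
    refine continuous_clm_apply.2 fun v => ?_
    simp only [LinearMap.coe_toContinuousLinearMap', Matrix.mulVecLin_apply]
    fun_prop
  exact _root_.linear_ODE_solution_eq_zero hA hy hy₀

theorem stmt_2_general {E : Type*} [NormedAddCommGroup E] [NormedSpace ℝ E]
    (X : E → E) (γ : ℝ → E) (hγ : Differentiable ℝ γ)
    (hint : ∀ t : ℝ, deriv γ t = X (γ t))
    (s : ℕ) (f : Fin s → E → ℝ) (hf : ∀ i, Differentiable ℝ (f i))
    (h : Fin s → Fin s → E → ℝ)
    (hcont : ∀ i j : Fin s, Continuous fun t : ℝ => h j i (γ t))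
    (hDar : ∀ (j : Fin s) (x : E), fderiv ℝ (f j) x (X x) = ∑ i, h j i x * f i x)
    (h0 : ∀ i, f i (γ 0) = 0) :
    ∀ (i : Fin s) (t : ℝ), f i (γ t) = 0 := by
  let y : ℝ → Fin s → ℝ := fun t j => f j (γ t)
  let M : ℝ → Matrix (Fin s) (Fin s) ℝ := fun t => Matrix.of fun j i => h j i (γ t)
  have hM : Continuous M := continuous_pi fun j => continuous_pi fun i => hcont i j
  have hy : ∀ t, HasDerivAt y (M t *ᵥ y t) t := fun t => hasDerivAt_pi.2 fun j => by
    have hchain := ((hf j) (γ t)).hasFDerivAt.comp_hasDerivAt t (hγ t).hasDerivAt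
    rwa [hint, hDar] at hchain
  have hy_zero : y = 0 := Matrix.linear_ODE_solution_eq_zero hM hy (funext h0)
  exact fun i t => congrFun (congrFun hy_zero t) i

/-- Along an integral curve of a vector field `X` on a real Banach space, a Darboux
family of functions (with continuous cofactors along the curve) that vanishes at the
initial point of the curve vanishes along the whole curve. -/
theorem stmt_2 {E : Type*} [NormedAddCommGroup E] [NormedSpace ℝ E] [CompleteSpace E]
    (X : E → E) (γ : ℝ → E) (hγ : Differentiable ℝ γ)
    (hint : ∀ t : ℝ, deriv γ t = X (γ t))
    (s : ℕ) (f : Fin s → E → ℝ) (hf : ∀ i, Differentiable ℝ (f i))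
    (h : Fin s → Fin s → E → ℝ)
    (hcont : ∀ i j : Fin s, Continuous fun t : ℝ => h j i (γ t))
    (hDar : ∀ (j : Fin s) (x : E), fderiv ℝ (f j) x (X x) = ∑ i, h j i x * f i x)
    (h0 : ∀ i, f i (γ 0) = 0) :
    ∀ (i : Fin s) (t : ℝ), f i (γ t) = 0 :=
  stmt_2_general X γ hγ hint s f hf h hcont hDar h0
end

section
/- Let g be a Lie algebra over a field K and let T : g ≃ g be a Lie algebra automorphism. For r ∈ g ⊗[K] g define δ_r : g → g ⊗ g by δ_r(v) = ⁅v, r⁆ (the action of g on g ⊗ g). Then for any r₁, r₂ ∈ g ⊗ g the following are equivalent: (i) (T ⊗ T)(δ_{r₁}(T⁻¹ v)) = δ_{r₂}(v) for all v ∈ g; (ii) ⁅v, (T ⊗ T) r₁ − r₂⁆ = 0 for all v ∈ g, i.e. (T ⊗ T) r₁ − r₂ is a g-invariant element of g ⊗ g. -/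
open TensorProduct

private lemma congr_lie {K : Type*} [Field K] {L : Type*} [LieRing L] [LieAlgebra K L]
    (T : L ≃ₗ[K] L) (hT : ∀ x y : L, T ⁅x, y⁆ = ⁅T x, T y⁆)
    (w : L) (r : L ⊗[K] L) :
    TensorProduct.congr T T ⁅w, r⁆ = ⁅T w, TensorProduct.congr T T r⁆ := by
  induction r using TensorProduct.induction_on with
  | zero => simp
  | tmul x y =>
    simp [TensorProduct.LieModule.lie_tmul_right, hT]
  | add a b ha hb =>
    simp only [lie_add, map_add, ha, hb]

/-- Two coboundary cocommutators `δ_{r₁}`, `δ_{r₂}` (with `δ_r v = ⁅v, r⁆`) are related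
by the Lie algebra automorphism `T`, i.e. `(T ⊗ T) ∘ δ_{r₁} ∘ T⁻¹ = δ_{r₂}`, if and only
if `(T ⊗ T) r₁ − r₂` is a `g`-invariant element of `g ⊗ g`. -/
theorem stmt_7 {K : Type*} [Field K] {L : Type*} [LieRing L] [LieAlgebra K L]
    (T : L ≃ₗ[K] L) (hT : ∀ x y : L, T ⁅x, y⁆ = ⁅T x, T y⁆)
    (r₁ r₂ : L ⊗[K] L) :
    (∀ v : L, TensorProduct.congr T T ⁅T.symm v, r₁⁆ = ⁅v, r₂⁆) ↔
      ∀ v : L, ⁅v, TensorProduct.congr T T r₁ - r₂⁆ = 0 := by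
  constructor
  · intro h v
    have := h v
    rw [congr_lie T hT, T.apply_symm_apply] at this
    rw [lie_sub, this, sub_self]
  · intro h v
    have := h v
    rw [lie_sub, sub_eq_zero] at this
    rw [congr_lie T hT, T.apply_symm_apply, this]
end

section
/- Let s₁ be the real 4-dimensional Lie algebra with basis e₁, e₂, e₃, e₄ and nonzero brackets ⁅e₂, e₄⁆ = −e₁ and ⁅e₃, e₄⁆ = −e₃ (all other brackets of basis elements zero, extended bilinearly and antisymmetrically). A linear endomorphism D of s₁ is a derivation of s₁ if and only if there exist real numbers μ₁₁, μ₁₂, μ₃₃, μ₁₄, μ₂₄, μ₃₄ such that D e₁ = μ₁₁ e₁, D e₂ = μ₁₂ e₁ + μ₁₁ e₂, D e₃ = μ₃₃ e₃, and D e₄ = μ₁₄ e₁ + μ₂₄ e₂ + μ₃₄ e₃. -/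
/-!
Leibniz' rule is bilinear, so it suffices to check it on pairs of basis vectors. Reading off
coordinates of those sixteen identities gives linear equations on the matrix of `D`, whose
solutions are exactly the stated family; conversely, each such `D` satisfies all sixteen.
-/

theorem LieAlgebra.leibniz_iff_forall_basis {R L ι : Type*} [CommRing R] [LieRing L]
    [LieAlgebra R L] (b : Module.Basis ι R L) (D : L →ₗ[R] L) :
    (∀ x y : L, D ⁅x, y⁆ = ⁅D x, y⁆ + ⁅x, D y⁆) ↔
      ∀ i j, D ⁅b i, b j⁆ = ⁅D (b i), b j⁆ + ⁅b i, D (b j)⁆ := by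
  let ad : L →ₗ[R] L →ₗ[R] L := LieModule.toEnd R L L
  have h := LinearMap.ext_iff_basis b b (B := ad.compr₂ D) (B' := ad ∘ₗ D + ad.compl₂ D)
  simp only [LinearMap.ext_iff₂] at h
  simpa [ad] using h

theorem Module.Basis.lie_eq_sum_repr_smul {R L ι : Type*} [CommRing R] [LieRing L]
    [LieAlgebra R L] [Fintype ι] (b : Module.Basis ι R L) (x y : L) :
    ⁅x, y⁆ = ∑ i, b.repr x i • ⁅b i, y⁆ := by
  conv_lhs => rw [← b.sum_repr x]
  simp only [sum_lie, smul_lie]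

section S41

variable {L : Type*} [LieRing L] [LieAlgebra ℝ L]

/-- The bracket table of `s_{4,1}` in the basis `eₖ = b (k - 1)`. -/
structure IsS41Basis (b : Module.Basis (Fin 4) ℝ L) : Prop where
  lie_zero_one : ⁅b 0, b 1⁆ = 0
  lie_zero_two : ⁅b 0, b 2⁆ = 0
  lie_zero_three : ⁅b 0, b 3⁆ = 0
  lie_one_two : ⁅b 1, b 2⁆ = 0
  lie_one_three : ⁅b 1, b 3⁆ = -b 0
  lie_two_three : ⁅b 2, b 3⁆ = -b 2

namespace IsS41Basis

variable {b : Module.Basis (Fin 4) ℝ L}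

theorem lie_basis_zero (hb : IsS41Basis b) (x : L) : ⁅x, b 0⁆ = 0 := by
  rw [b.lie_eq_sum_repr_smul, Fin.sum_univ_four, ← lie_skew (b 1), ← lie_skew (b 2),
    ← lie_skew (b 3), hb.lie_zero_one, hb.lie_zero_two, hb.lie_zero_three]
  simp

theorem lie_basis_one (hb : IsS41Basis b) (x : L) : ⁅x, b 1⁆ = b.repr x 3 • b 0 := by
  rw [b.lie_eq_sum_repr_smul, Fin.sum_univ_four, ← lie_skew (b 2), ← lie_skew (b 3),
    hb.lie_zero_one, hb.lie_one_two, hb.lie_one_three]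
  simp

theorem lie_basis_two (hb : IsS41Basis b) (x : L) : ⁅x, b 2⁆ = b.repr x 3 • b 2 := by
  rw [b.lie_eq_sum_repr_smul, Fin.sum_univ_four, ← lie_skew (b 3),
    hb.lie_zero_two, hb.lie_one_two, hb.lie_two_three]
  simp

theorem lie_basis_three (hb : IsS41Basis b) (x : L) :
    ⁅x, b 3⁆ = -(b.repr x 1 • b 0 + b.repr x 2 • b 2) := by
  rw [b.lie_eq_sum_repr_smul, Fin.sum_univ_four,
    hb.lie_zero_three, hb.lie_one_three, hb.lie_two_three]
  simp
  abel

theorem exists_of_leibniz_basis (hb : IsS41Basis b) {D : L →ₗ[ℝ] L}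
    (hD : ∀ i j, D ⁅b i, b j⁆ = ⁅D (b i), b j⁆ + ⁅b i, D (b j)⁆) :
    ∃ μ11 μ12 μ33 μ14 μ24 μ34 : ℝ,
      D (b 0) = μ11 • b 0 ∧
      D (b 1) = μ12 • b 0 + μ11 • b 1 ∧
      D (b 2) = μ33 • b 2 ∧
      D (b 3) = μ14 • b 0 + μ24 • b 1 + μ34 • b 2 := by
  -- Basis vectors are put on the right, where `lie_basis_*` evaluate the brackets;
  -- `hijm` below is coordinate `m` of the Leibniz rule on the pair `(b i, b j)`.
  have coord (i j m : Fin 4) : b.repr (D ⁅b i, b j⁆) m =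
      b.repr (⁅D (b i), b j⁆ - ⁅D (b j), b i⁆) m := by
    rw [hD, sub_eq_add_neg, lie_skew]
  have h010 := coord 0 1 0
  have h030 := coord 0 3 0
  have h032 := coord 0 3 2
  have h120 := coord 1 2 0
  have h122 := coord 1 2 2
  have h130 := coord 1 3 0
  have h132 := coord 1 3 2
  have h230 := coord 2 3 0
  have h231 := coord 2 3 1
  have h232 := coord 2 3 2
  have h233 := coord 2 3 3
  simp only [hb.lie_zero_one, hb.lie_zero_three, hb.lie_one_two, hb.lie_one_three,
    hb.lie_two_three, hb.lie_basis_zero, hb.lie_basis_one, hb.lie_basis_two,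
    hb.lie_basis_three, map_zero, map_neg, map_sub, map_add, map_smul, b.repr_self,
    Finsupp.coe_sub, Finsupp.coe_neg, Finsupp.coe_add, Finsupp.coe_smul, Finsupp.coe_zero,
    Pi.sub_apply, Pi.neg_apply, Pi.add_apply, Pi.smul_apply, Pi.zero_apply,
    Finsupp.single_apply, Fin.reduceEq, ↓reduceIte, smul_eq_mul]
    at h010 h030 h032 h120 h122 h130 h132 h230 h231 h232 h233
  refine ⟨b.repr (D (b 0)) 0, b.repr (D (b 1)) 0, b.repr (D (b 2)) 2, b.repr (D (b 3)) 0,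
    b.repr (D (b 3)) 1, b.repr (D (b 3)) 2, ?_, ?_, ?_, ?_⟩ <;>
  refine b.ext_elem fun m => ?_ <;> fin_cases m <;>
  simp [b.repr_self] <;> linarith

theorem leibniz_basis_of_eq (hb : IsS41Basis b) {D : L →ₗ[ℝ] L}
    {μ11 μ12 μ33 μ14 μ24 μ34 : ℝ} (hD0 : D (b 0) = μ11 • b 0)
    (hD1 : D (b 1) = μ12 • b 0 + μ11 • b 1) (hD2 : D (b 2) = μ33 • b 2)
    (hD3 : D (b 3) = μ14 • b 0 + μ24 • b 1 + μ34 • b 2) (i j : Fin 4) :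
    D ⁅b i, b j⁆ = ⁅D (b i), b j⁆ + ⁅b i, D (b j)⁆ := by
  rw [← lie_skew (b i) (D (b j))]
  fin_cases i <;> fin_cases j <;>
  simp [hD0, hD1, hD2, hD3, hb.lie_basis_zero, hb.lie_basis_one, hb.lie_basis_two,
    hb.lie_basis_three, b.repr_self]

end IsS41Basis

end S41

/-- Characterization of the derivations of the real 4-dimensional Lie algebra `s₁`
(Šnobl–Winternitz `s_{4,1}`), with basis `e₁ = b 0, …, e₄ = b 3` and nonzero brackets
`⁅e₂, e₄⁆ = -e₁`, `⁅e₃, e₄⁆ = -e₃`. -/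
theorem stmt_9 {L : Type*} [LieRing L] [LieAlgebra ℝ L]
    (b : Module.Basis (Fin 4) ℝ L)
    (h12 : ⁅b 0, b 1⁆ = 0) (h13 : ⁅b 0, b 2⁆ = 0) (h14 : ⁅b 0, b 3⁆ = 0)
    (h23 : ⁅b 1, b 2⁆ = 0) (h24 : ⁅b 1, b 3⁆ = -b 0) (h34 : ⁅b 2, b 3⁆ = -b 2)
    (D : L →ₗ[ℝ] L) :
    (∀ x y : L, D ⁅x, y⁆ = ⁅D x, y⁆ + ⁅x, D y⁆) ↔
      ∃ μ11 μ12 μ33 μ14 μ24 μ34 : ℝ,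
        D (b 0) = μ11 • b 0 ∧
        D (b 1) = μ12 • b 0 + μ11 • b 1 ∧
        D (b 2) = μ33 • b 2 ∧
        D (b 3) = μ14 • b 0 + μ24 • b 1 + μ34 • b 2 := by
  have hb : IsS41Basis b := ⟨h12, h13, h14, h23, h24, h34⟩
  rw [LieAlgebra.leibniz_iff_forall_basis b]
  refine ⟨hb.exists_of_leibniz_basis, ?_⟩
  rintro ⟨μ11, μ12, μ33, μ14, μ24, μ34, hD0, hD1, hD2, hD3⟩
  exact hb.leibniz_basis_of_eq hD0 hD1 hD2 hD3
end

section
/- Let s₁ be the real 4-dimensional Lie algebra with basis e₁, e₂, e₃, e₄ and nonzero brackets ⁅e₂, e₄⁆ = −e₁ and ⁅e₃, e₄⁆ = −e₃ (all other brackets of basis elements zero, extended bilinearly and antisymmetrically). A linear equivalence T : s₁ ≃ s₁ is a Lie algebra automorphism of s₁ if and only if there exist real numbers a ≠ 0, c ≠ 0 and b, p, q, r ∈ ℝ such that T e₁ = a e₁, T e₂ = b e₁ + a e₂, T e₃ = c e₃, and T e₄ = p e₁ + q e₂ + r e₃ + e₄. -/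
/-!
In the coordinates `xᵢ = b.repr x i` the bracket of `s₁` is
`⁅x, y⁆ = (x₃ y₁ - x₁ y₃) • b 0 + (x₃ y₂ - x₂ y₃) • b 2` (indices from `0`, so `b 0 = e₁`).
Comparing coordinates of `T ⁅b i, b k⁆ = ⁅T (b i), T (b k)⁆` for the pairs `(1, 3)`, `(2, 3)`,
`(0, 3)`, `(1, 2)` forces the matrix of `T` into the stated shape, and injectivity of `T` gives
`a, c ≠ 0`. Conversely a map of that shape transforms `x₁, x₂, x₃` so that the coordinate formula
for the bracket is multiplied by `a` in the `b 0` component and by `c` in the `b 2` component.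
-/

theorem LinearEquiv.ne_zero_of_apply_eq_smul {R M N : Type*} [Semiring R] [AddCommMonoid M]
    [AddCommMonoid N] [Module R M] [Module R N] (T : M ≃ₗ[R] N) {v : M} (hv : v ≠ 0) {s : R}
    {w : N} (h : T v = s • w) : s ≠ 0 := by
  rintro rfl
  exact hv (T.map_eq_zero_iff.mp (by rw [h, zero_smul]))

structure IsS41Basis_s10 {L : Type*} [LieRing L] [LieAlgebra ℝ L] (b : Module.Basis (Fin 4) ℝ L) :
    Prop where
  lie_zero_one : ⁅b 0, b 1⁆ = 0
  lie_zero_two : ⁅b 0, b 2⁆ = 0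
  lie_zero_three : ⁅b 0, b 3⁆ = 0
  lie_one_two : ⁅b 1, b 2⁆ = 0
  lie_one_three : ⁅b 1, b 3⁆ = -b 0
  lie_two_three : ⁅b 2, b 3⁆ = -b 2

namespace IsS41Basis_s10

variable {L : Type*} [LieRing L] [LieAlgebra ℝ L] {b : Module.Basis (Fin 4) ℝ L}

theorem lie_eq (hb : IsS41Basis_s10 b) (x y : L) :
    ⁅x, y⁆ = (b.repr x 3 * b.repr y 1 - b.repr x 1 * b.repr y 3) • b 0 +
      (b.repr x 3 * b.repr y 2 - b.repr x 2 * b.repr y 3) • b 2 := by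
  have skew {u v w : L} (h : ⁅u, v⁆ = w) : ⁅v, u⁆ = -w := by rw [← lie_skew, h]
  conv_lhs => rw [← b.sum_repr x, ← b.sum_repr y]
  simp only [Fin.sum_univ_four, add_lie, lie_add, smul_lie, lie_smul, lie_self, hb.lie_zero_one,
    hb.lie_zero_two, hb.lie_zero_three, hb.lie_one_two, hb.lie_one_three, hb.lie_two_three,
    skew hb.lie_zero_one, skew hb.lie_zero_two, skew hb.lie_zero_three, skew hb.lie_one_two,
    skew hb.lie_one_three, skew hb.lie_two_three]
  module

theorem repr_lie_zero (hb : IsS41Basis_s10 b) (x y : L) :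
    b.repr ⁅x, y⁆ 0 = b.repr x 3 * b.repr y 1 - b.repr x 1 * b.repr y 3 := by
  simp [hb.lie_eq]

theorem repr_lie_one (hb : IsS41Basis_s10 b) (x y : L) : b.repr ⁅x, y⁆ 1 = 0 := by
  simp [hb.lie_eq]

theorem repr_lie_two (hb : IsS41Basis_s10 b) (x y : L) :
    b.repr ⁅x, y⁆ 2 = b.repr x 3 * b.repr y 2 - b.repr x 2 * b.repr y 3 := by
  simp [hb.lie_eq]

theorem repr_lie_three (hb : IsS41Basis_s10 b) (x y : L) : b.repr ⁅x, y⁆ 3 = 0 := by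
  simp [hb.lie_eq]

theorem map_lie_of_apply_basis_eq (hb : IsS41Basis_s10 b) (T : L →ₗ[ℝ] L) {a c β p q r : ℝ}
    (h0 : T (b 0) = a • b 0) (h1 : T (b 1) = β • b 0 + a • b 1) (h2 : T (b 2) = c • b 2)
    (h3 : T (b 3) = p • b 0 + q • b 1 + r • b 2 + b 3) (x y : L) :
    T ⁅x, y⁆ = ⁅T x, T y⁆ := by
  have repr_T (z : L) : b.repr (T z) = b.repr (∑ i, b.repr z i • T (b i)) := by
    conv_lhs => rw [← b.sum_repr z]
    simp only [map_sum, map_smul]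
  have repr_T_one (z : L) : b.repr (T z) 1 = b.repr z 1 * a + b.repr z 3 * q := by
    simp [repr_T, Fin.sum_univ_four, h0, h1, h2, h3]
  have repr_T_two (z : L) : b.repr (T z) 2 = b.repr z 2 * c + b.repr z 3 * r := by
    simp [repr_T, Fin.sum_univ_four, h0, h1, h2, h3]
  have repr_T_three (z : L) : b.repr (T z) 3 = b.repr z 3 := by
    simp [repr_T, Fin.sum_univ_four, h0, h1, h2, h3]
  rw [hb.lie_eq x, hb.lie_eq (T x), repr_T_one, repr_T_one, repr_T_two, repr_T_two, repr_T_three,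
    repr_T_three, map_add, map_smul, map_smul, h0, h2]
  module

theorem exists_apply_basis_eq_of_map_lie (hb : IsS41Basis_s10 b) (T : L ≃ₗ[ℝ] L)
    (hT : ∀ x y : L, T ⁅x, y⁆ = ⁅T x, T y⁆) :
    ∃ a c β p q r : ℝ, a ≠ 0 ∧ c ≠ 0 ∧
      T (b 0) = a • b 0 ∧
      T (b 1) = β • b 0 + a • b 1 ∧
      T (b 2) = c • b 2 ∧
      T (b 3) = p • b 0 + q • b 1 + r • b 2 + b 3 := by
  obtain ⟨t, ht⟩ : ∃ t : Fin 4 → Fin 4 → ℝ, ∀ i j, b.repr (T (b i)) j = t i j := ⟨_, fun _ _ => rfl⟩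
  have expand (i : Fin 4) : T (b i) = t i 0 • b 0 + t i 1 • b 1 + t i 2 • b 2 + t i 3 • b 3 := by
    conv_lhs => rw [← b.sum_repr (T (b i))]
    simp only [Fin.sum_univ_four, ht]
  have coord (i k j : Fin 4) : b.repr (T ⁅b i, b k⁆) j = b.repr ⁅T (b i), T (b k)⁆ j := by
    rw [hT]
  have e130 := coord 1 3 0
  have e131 := coord 1 3 1
  have e132 := coord 1 3 2
  have e133 := coord 1 3 3
  have e230 := coord 2 3 0
  have e231 := coord 2 3 1
  have e232 := coord 2 3 2
  have e233 := coord 2 3 3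
  have e032 := coord 0 3 2
  have e122 := coord 1 2 2
  simp only [hb.lie_one_three, hb.lie_two_three, hb.lie_zero_three, hb.lie_one_two, map_neg,
    map_zero, Finsupp.neg_apply, Finsupp.zero_apply, hb.repr_lie_zero, hb.repr_lie_one,
    hb.repr_lie_two, hb.repr_lie_three, ht] at e130 e131 e132 e133 e230 e231 e232 e233 e032 e122
  have t01 : t 0 1 = 0 := by linarith
  have t03 : t 0 3 = 0 := by linarith
  have t21 : t 2 1 = 0 := by linarith
  have t23 : t 2 3 = 0 := by linarith
  have t20 : t 2 0 = 0 := by rw [t21, t23] at e230; linarith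
  have hT2 : T (b 2) = t 2 2 • b 2 := by rw [expand 2, t20, t21, t23]; module
  have hc : t 2 2 ≠ 0 := T.ne_zero_of_apply_eq_smul (b.ne_zero 2) hT2
  have t33 : t 3 3 = 1 := mul_left_cancel₀ hc (by rw [t23] at e232; linarith)
  have t02 : t 0 2 = 0 := by rw [t03, t33] at e032; linarith
  have hT0 : T (b 0) = t 0 0 • b 0 := by rw [expand 0, t01, t02, t03]; module
  have t13 : t 1 3 = 0 := (mul_eq_zero.mp (by rw [t23] at e122; linarith)).resolve_right hc
  have t11 : t 1 1 = t 0 0 := by rw [t13, t33] at e130; linarith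
  have t12 : t 1 2 = 0 := by rw [t13, t33, t02] at e132; linarith
  refine ⟨t 0 0, t 2 2, t 1 0, t 3 0, t 3 1, t 3 2,
    T.ne_zero_of_apply_eq_smul (b.ne_zero 0) hT0, hc, hT0, ?_, hT2, ?_⟩
  · rw [expand 1, t11, t12, t13]; module
  · rw [expand 3, t33]; module

end IsS41Basis_s10

/-- Characterization of the Lie algebra automorphisms of the real 4-dimensional Lie
algebra `s₁` (Šnobl–Winternitz `s_{4,1}`), with basis `e₁ = b 0, …, e₄ = b 3` and
nonzero brackets `⁅e₂, e₄⁆ = -e₁`, `⁅e₃, e₄⁆ = -e₃`. -/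
theorem stmt_10 {L : Type*} [LieRing L] [LieAlgebra ℝ L]
    (b : Module.Basis (Fin 4) ℝ L)
    (h12 : ⁅b 0, b 1⁆ = 0) (h13 : ⁅b 0, b 2⁆ = 0) (h14 : ⁅b 0, b 3⁆ = 0)
    (h23 : ⁅b 1, b 2⁆ = 0) (h24 : ⁅b 1, b 3⁆ = -b 0) (h34 : ⁅b 2, b 3⁆ = -b 2)
    (T : L ≃ₗ[ℝ] L) :
    (∀ x y : L, T ⁅x, y⁆ = ⁅T x, T y⁆) ↔
      ∃ a c bb p q r : ℝ, a ≠ 0 ∧ c ≠ 0 ∧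
        T (b 0) = a • b 0 ∧
        T (b 1) = bb • b 0 + a • b 1 ∧
        T (b 2) = c • b 2 ∧
        T (b 3) = p • b 0 + q • b 1 + r • b 2 + b 3 := by
  have hb : IsS41Basis_s10 b := ⟨h12, h13, h14, h23, h24, h34⟩
  refine ⟨hb.exists_apply_basis_eq_of_map_lie T, ?_⟩
  rintro ⟨a, c, bb, p, q, r, -, -, h0, h1, h2, h3⟩
  exact hb.map_lie_of_apply_basis_eq T.toLinearMap h0 h1 h2 h3
end

section
/- Let s₂ be the real 4-dimensional Lie algebra with basis e₁, e₂, e₃, e₄ and nonzero brackets ⁅e₁, e₄⁆ = −e₁, ⁅e₂, e₄⁆ = −e₁ − e₂, ⁅e₃, e₄⁆ = −e₂ − e₃ (all other brackets of basis elements zero, extended bilinearly and antisymmetrically). A linear endomorphism D of s₂ is a derivation of s₂ if and only if there exist real numbers μ₁₁, μ₁₂, μ₁₃, μ₁₄, μ₂₄, μ₃₄ such that D e₁ = μ₁₁ e₁, D e₂ = μ₁₂ e₁ + μ₁₁ e₂, D e₃ = μ₁₃ e₁ + μ₁₂ e₂ + μ₁₁ e₃, and D e₄ = μ₁₄ e₁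 + μ₂₄ e₂ + μ₃₄ e₃. -/
/-!
The Leibniz rule is bilinear in `(x, y)`, so it suffices to check it on pairs `eᵢ, eⱼ` with
`i < j`. The span of `e₁, e₂, e₃` is an abelian ideal on which `⁅·, e₄⁆` acts by
`e₁ ↦ -e₁, e₂ ↦ -e₁ - e₂, e₃ ↦ -e₂ - e₃`. The pairs inside the ideal kill the `e₄`-components of
`D e₁, D e₂, D e₃`; comparing coordinates in the pairs `(eᵢ, e₄)` gives a linear system forcing
`3 · (e₄-component of D e₄) = 0` and tying the remaining coefficients together as stated.
Conversely, the six Leibniz identities for the stated `D` are direct computations.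
-/

open Module

theorem forall_leibniz_iff_basis {R L ι : Type*} [CommRing R] [LieRing L] [LieAlgebra R L]
    (b : Basis ι R L) (D : L →ₗ[R] L) :
    (∀ x y : L, D ⁅x, y⁆ = ⁅D x, y⁆ + ⁅x, D y⁆) ↔
      ∀ i j, D ⁅b i, b j⁆ = ⁅D (b i), b j⁆ + ⁅b i, D (b j)⁆ := by
  refine ⟨fun h i j => h _ _, fun h x y => ?_⟩
  let ad := (LieAlgebra.ad R L : L →ₗ[R] Module.End R L)
  have key : ad.compr₂ D = ad ∘ₗ D + ad.compl₂ D :=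
    LinearMap.ext_basis b b fun i j => by simpa [ad] using h i j
  simpa [ad] using LinearMap.congr_fun₂ key x y

theorem forall_leibniz_iff_basis_lt {R L ι : Type*} [CommRing R] [LieRing L] [LieAlgebra R L]
    [LinearOrder ι] (b : Basis ι R L) (D : L →ₗ[R] L) :
    (∀ x y : L, D ⁅x, y⁆ = ⁅D x, y⁆ + ⁅x, D y⁆) ↔
      ∀ i j, i < j → D ⁅b i, b j⁆ = ⁅D (b i), b j⁆ + ⁅b i, D (b j)⁆ := by
  rw [forall_leibniz_iff_basis b]
  refine ⟨fun h i j _ => h i j, fun h i j => ?_⟩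
  rcases lt_trichotomy i j with hij | rfl | hji
  · exact h i j hij
  · rw [lie_self, map_zero, ← lie_skew (b i), add_neg_cancel]
  · rw [← lie_skew, map_neg, h j i hji, ← lie_skew (D (b j)), ← lie_skew (b j)]
    abel

theorem Module.Basis.sum_repr_fin_four {R M : Type*} [Semiring R] [AddCommMonoid M] [Module R M]
    (b : Basis (Fin 4) R M) (x : M) :
    b.repr x 0 • b 0 + b.repr x 1 • b 1 + b.repr x 2 • b 2 + b.repr x 3 • b 3 = x := by
  rw [← Fin.sum_univ_four (fun i => b.repr x i • b i), b.sum_repr]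

/-- `b 0, …, b 3` play the roles of `e₁, …, e₄` in the Šnobl–Winternitz algebra `s_{4,2}`. -/
structure IsS42Basis {R L : Type*} [CommRing R] [LieRing L] [LieAlgebra R L]
    (b : Basis (Fin 4) R L) : Prop where
  lie_01 : ⁅b 0, b 1⁆ = 0
  lie_02 : ⁅b 0, b 2⁆ = 0
  lie_03 : ⁅b 0, b 3⁆ = -b 0
  lie_12 : ⁅b 1, b 2⁆ = 0
  lie_13 : ⁅b 1, b 3⁆ = -b 0 - b 1
  lie_23 : ⁅b 2, b 3⁆ = -b 1 - b 2

namespace IsS42Basis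

variable {R L : Type*} [CommRing R] [LieRing L] [LieAlgebra R L] {b : Basis (Fin 4) R L}

theorem lie_basis_three (hb : IsS42Basis b) (x : L) :
    ⁅x, b 3⁆ = -(b.repr x 0 + b.repr x 1) • b 0 - (b.repr x 1 + b.repr x 2) • b 1 -
      b.repr x 2 • b 2 := by
  conv_lhs => rw [← b.sum_repr_fin_four x]
  simp only [add_lie, smul_lie, hb.lie_03, hb.lie_13, hb.lie_23, lie_self, smul_zero, add_zero]
  module

theorem basis_lie_of_ne_three (hb : IsS42Basis b) {i : Fin 4} (hi : i ≠ 3) (x : L) :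
    ⁅b i, x⁆ = b.repr x 3 • ⁅b i, b 3⁆ := by
  conv_lhs => rw [← b.sum_repr_fin_four x]
  fin_cases i <;>
    simp [hb.lie_01, hb.lie_02, hb.lie_12, ← lie_skew (b 1) (b 0), ← lie_skew (b 2) (b 0),
      ← lie_skew (b 2) (b 1)] at hi ⊢

theorem basis_lie_basis_eq_zero (hb : IsS42Basis b) {i j : Fin 4} (hi : i ≠ 3) (hj : j ≠ 3) :
    ⁅b i, b j⁆ = 0 := by
  rw [hb.basis_lie_of_ne_three hi, b.repr_self, Finsupp.single_eq_of_ne hj.symm, zero_smul]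

theorem apply_basis_lie_three (hb : IsS42Basis b) {D : L →ₗ[R] L}
    (hD : ∀ i j : Fin 4, i < j → D ⁅b i, b j⁆ = ⁅D (b i), b j⁆ + ⁅b i, D (b j)⁆)
    {i : Fin 4} (hi : i ≠ 3) :
    D ⁅b i, b 3⁆ = ⁅D (b i), b 3⁆ + b.repr (D (b 3)) 3 • ⁅b i, b 3⁆ := by
  rw [hD i 3 (lt_of_le_of_ne (Fin.le_last i) hi), hb.basis_lie_of_ne_three hi]

theorem repr_three_smul_lie_comm (hb : IsS42Basis b) {D : L →ₗ[R] L}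
    (hD : ∀ i j : Fin 4, i < j → D ⁅b i, b j⁆ = ⁅D (b i), b j⁆ + ⁅b i, D (b j)⁆)
    {i j : Fin 4} (hi : i ≠ 3) (hj : j ≠ 3) (hij : i < j) :
    b.repr (D (b j)) 3 • ⁅b i, b 3⁆ = b.repr (D (b i)) 3 • ⁅b j, b 3⁆ := by
  have h := hD i j hij
  rw [hb.basis_lie_basis_eq_zero hi hj, map_zero, ← lie_skew, hb.basis_lie_of_ne_three hi,
    hb.basis_lie_of_ne_three hj] at h
  exact (neg_add_eq_zero.mp h.symm).symm

theorem repr_apply_three_eq_zero (hb : IsS42Basis b) {D : L →ₗ[R] L}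
    (hD : ∀ i j : Fin 4, i < j → D ⁅b i, b j⁆ = ⁅D (b i), b j⁆ + ⁅b i, D (b j)⁆) :
    b.repr (D (b 0)) 3 = 0 ∧ b.repr (D (b 1)) 3 = 0 ∧ b.repr (D (b 2)) 3 = 0 := by
  have e01 := hb.repr_three_smul_lie_comm hD (i := 0) (j := 1) (by decide) (by decide) (by decide)
  have e02 := hb.repr_three_smul_lie_comm hD (i := 0) (j := 2) (by decide) (by decide) (by decide)
  rw [hb.lie_03, hb.lie_13] at e01
  rw [hb.lie_03, hb.lie_23] at e02
  have h0 : b.repr (D (b 0)) 3 = 0 := by simpa using congr(b.repr $e01 1)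
  refine ⟨h0, ?_, ?_⟩
  · simpa [h0] using congr(b.repr $e01 0)
  · simpa [h0] using congr(b.repr $e02 0)

theorem exists_coeffs_of_leibniz [NoZeroDivisors R] [CharZero R] (hb : IsS42Basis b)
    {D : L →ₗ[R] L}
    (hD : ∀ i j : Fin 4, i < j → D ⁅b i, b j⁆ = ⁅D (b i), b j⁆ + ⁅b i, D (b j)⁆) :
    ∃ μ11 μ12 μ13 μ14 μ24 μ34 : R,
        D (b 0) = μ11 • b 0 ∧
        D (b 1) = μ12 • b 0 + μ11 • b 1 ∧
        D (b 2) = μ13 • b 0 + μ12 • b 1 + μ11 • b 2 ∧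
        D (b 3) = μ14 • b 0 + μ24 • b 1 + μ34 • b 2 := by
  obtain ⟨ha3, hp3, hq3⟩ := hb.repr_apply_three_eq_zero hD
  have e03 := hb.apply_basis_lie_three hD (i := 0) (by decide)
  have e13 := hb.apply_basis_lie_three hD (i := 1) (by decide)
  have e23 := hb.apply_basis_lie_three hD (i := 2) (by decide)
  rw [hb.lie_03, hb.lie_basis_three] at e03
  rw [hb.lie_13, hb.lie_basis_three] at e13
  rw [hb.lie_23, hb.lie_basis_three] at e23
  simp only [map_neg, map_sub] at e03 e13 e23
  set a := b.repr (D (b 0)) with ha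
  set p := b.repr (D (b 1)) with hp
  set q := b.repr (D (b 2)) with hq
  set r := b.repr (D (b 3))
  have ha1 : a 1 = -r 3 := by
    have h := congr(b.repr $e03 0); simp [← ha] at h; linear_combination h
  have ha2 : a 2 = 0 := by
    have h := congr(b.repr $e03 1); simp [← ha] at h; linear_combination h
  have hp1 : p 1 = a 0 - r 3 := by
    have h := congr(b.repr $e13 0); simp [← ha, ← hp] at h; linear_combination h
  have hp2 : p 2 = a 1 - r 3 := by
    have h := congr(b.repr $e13 1); simp [← ha, ← hp] at h; linear_combination h
  have hq1 : q 1 = p 0 := by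
    have h := congr(b.repr $e23 0); simp [← hp, ← hq] at h; linear_combination h
  have hq2 : q 2 = p 1 - r 3 := by
    have h := congr(b.repr $e23 1); simp [← hp, ← hq] at h; linear_combination h
  have hp2' : p 2 = r 3 := by
    have h := congr(b.repr $e23 2); simp [← hp, ← hq] at h; linear_combination -h
  have hr3 : r 3 = 0 := by
    have h3 : (3 : R) * r 3 = 0 := by linear_combination hp2 - hp2' + ha1
    simpa using h3
  refine ⟨a 0, p 0, q 0, r 0, r 1, r 2, ?_, ?_, ?_, ?_⟩
  · rw [← b.sum_repr_fin_four (D (b 0)), ha1, ha2, ha3, hr3]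
    module
  · rw [← b.sum_repr_fin_four (D (b 1)), hp1, hp2, hp3, ha1, hr3]
    module
  · rw [← b.sum_repr_fin_four (D (b 2)), hq1, hq2, hq3, hp1, hr3]
    module
  · rw [← b.sum_repr_fin_four (D (b 3)), hr3]
    module

theorem leibniz_of_coeffs (hb : IsS42Basis b) {D : L →ₗ[R] L} {μ11 μ12 μ13 μ14 μ24 μ34 : R}
    (h0 : D (b 0) = μ11 • b 0) (h1 : D (b 1) = μ12 • b 0 + μ11 • b 1)
    (h2 : D (b 2) = μ13 • b 0 + μ12 • b 1 + μ11 • b 2)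
    (h3 : D (b 3) = μ14 • b 0 + μ24 • b 1 + μ34 • b 2) (i j : Fin 4) (hij : i < j) :
    D ⁅b i, b j⁆ = ⁅D (b i), b j⁆ + ⁅b i, D (b j)⁆ := by
  fin_cases i <;> fin_cases j <;> try exact absurd hij (by decide)
  all_goals
    simp only [Fin.reduceFinMk, Fin.isValue, h0, h1, h2, h3, hb.lie_01, hb.lie_02, hb.lie_03,
      hb.lie_12, hb.lie_13, hb.lie_23, ← lie_skew (b 1) (b 0), ← lie_skew (b 2) (b 0),
      ← lie_skew (b 2) (b 1), lie_add, add_lie, lie_smul, smul_lie, lie_self, map_neg, map_sub,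
      map_zero]
    module

end IsS42Basis

/-- Characterization of the derivations of the real 4-dimensional Lie algebra `s₂`
(Šnobl–Winternitz `s_{4,2}`), with basis `e₁ = b 0, …, e₄ = b 3` and nonzero brackets
`⁅e₁, e₄⁆ = -e₁`, `⁅e₂, e₄⁆ = -e₁ - e₂`, `⁅e₃, e₄⁆ = -e₂ - e₃`. -/
theorem stmt_11 {L : Type*} [LieRing L] [LieAlgebra ℝ L]
    (b : Module.Basis (Fin 4) ℝ L)
    (h12 : ⁅b 0, b 1⁆ = 0) (h13 : ⁅b 0, b 2⁆ = 0) (h14 : ⁅b 0, b 3⁆ = -b 0)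
    (h23 : ⁅b 1, b 2⁆ = 0) (h24 : ⁅b 1, b 3⁆ = -b 0 - b 1) (h34 : ⁅b 2, b 3⁆ = -b 1 - b 2)
    (D : L →ₗ[ℝ] L) :
    (∀ x y : L, D ⁅x, y⁆ = ⁅D x, y⁆ + ⁅x, D y⁆) ↔
      ∃ μ11 μ12 μ13 μ14 μ24 μ34 : ℝ,
        D (b 0) = μ11 • b 0 ∧
        D (b 1) = μ12 • b 0 + μ11 • b 1 ∧
        D (b 2) = μ13 • b 0 + μ12 • b 1 + μ11 • b 2 ∧
        D (b 3) = μ14 • b 0 + μ24 • b 1 + μ34 • b 2 := by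
  have hb : IsS42Basis b := ⟨h12, h13, h14, h23, h24, h34⟩
  rw [forall_leibniz_iff_basis_lt b]
  exact ⟨hb.exists_coeffs_of_leibniz,
    fun ⟨_, _, _, _, _, _, h0, h1, h2, h3⟩ => hb.leibniz_of_coeffs h0 h1 h2 h3⟩
end

section
/- Let s₂ be the real 4-dimensional Lie algebra with basis e₁, e₂, e₃, e₄ and nonzero brackets ⁅e₁, e₄⁆ = −e₁, ⁅e₂, e₄⁆ = −e₁ − e₂, ⁅e₃, e₄⁆ = −e₂ − e₃ (all other brackets of basis elements zero, extended bilinearly and antisymmetrically). A linear equivalence T : s₂ ≃ s₂ is a Lie algebra automorphism of s₂ if and only if there exist real numbers a ≠ 0 and b, c, p, q, r ∈ ℝ such that T e₁ = a e₁, T e₂ = b e₁ + a e₂, T e₃ = c e₁ + b e₂ + a e₃, and T e₄ = p e₁ + q e₂ + r e₃ + e₄. -/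
/-!
In the basis `b`, `D = span (b 0, b 1, b 2)` is an abelian ideal on which `ad (b 3)` acts as a
single unipotent Jordan block, and every bracket is `⁅x, y⁆ = ⁅b 3, x₃ • y - y₃ • x⁆`, where `x₃`,
`y₃` are the `b 3`-coordinates. Since `b 0, b 1, b 2` lie in the image of `ad (b 3)`, a Lie
automorphism `T` maps them into `D`; if `s` is the `b 3`-coordinate of `T (b 3)`, then
`T ∘ ad (b 3) = s • ad (b 3) ∘ T` on `D`, and unipotence together with injectivity forces `s = 1`.
So `T` preserves the `b 3`-coordinate and commutes with `ad (b 3)` on `D`; conversely these two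
properties make `T` a Lie map by the bracket formula. Commuting with the nilpotent shift
`ad (b 3) - 1` on `D` is exactly the triangular Toeplitz shape of `T` on `D`.
-/

structure IsS42Basis_s12 {K L : Type*} [CommRing K] [LieRing L] [LieAlgebra K L]
    (b : Module.Basis (Fin 4) K L) : Prop where
  lie_b0_b1 : ⁅b 0, b 1⁆ = 0
  lie_b0_b2 : ⁅b 0, b 2⁆ = 0
  lie_b0_b3 : ⁅b 0, b 3⁆ = -b 0
  lie_b1_b2 : ⁅b 1, b 2⁆ = 0
  lie_b1_b3 : ⁅b 1, b 3⁆ = -b 0 - b 1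
  lie_b2_b3 : ⁅b 2, b 3⁆ = -b 1 - b 2

theorem Module.Basis.eq_sum_repr_fin_four {K M : Type*} [CommRing K] [AddCommGroup M]
    [Module K M] (b : Basis (Fin 4) K M) (x : M) :
    x = b.repr x 0 • b 0 + b.repr x 1 • b 1 + b.repr x 2 • b 2 + b.repr x 3 • b 3 := by
  rw [← b.sum_repr x, Fin.sum_univ_four]
  simp

namespace IsS42Basis_s12

variable {K L : Type*} [CommRing K] [LieRing L] [LieAlgebra K L] {b : Module.Basis (Fin 4) K L}

theorem lie_b3_b0 (hb : IsS42Basis_s12 b) : ⁅b 3, b 0⁆ = b 0 := by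
  rw [← lie_skew, hb.lie_b0_b3, neg_neg]

theorem lie_b3_b1 (hb : IsS42Basis_s12 b) : ⁅b 3, b 1⁆ = b 0 + b 1 := by
  rw [← lie_skew, hb.lie_b1_b3]; abel

theorem lie_b3_b2 (hb : IsS42Basis_s12 b) : ⁅b 3, b 2⁆ = b 1 + b 2 := by
  rw [← lie_skew, hb.lie_b2_b3]; abel

theorem lie_b3_eq (hb : IsS42Basis_s12 b) (x : L) :
    ⁅b 3, x⁆ = (b.repr x 0 + b.repr x 1) • b 0 + (b.repr x 1 + b.repr x 2) • b 1 +
      b.repr x 2 • b 2 := by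
  conv_lhs => rw [b.eq_sum_repr_fin_four x]
  simp only [lie_add, lie_smul, lie_self, hb.lie_b3_b0, hb.lie_b3_b1, hb.lie_b3_b2]
  module

theorem repr_lie_b3_zero (hb : IsS42Basis_s12 b) (x : L) :
    b.repr ⁅b 3, x⁆ 0 = b.repr x 0 + b.repr x 1 := by
  simp [hb.lie_b3_eq]

theorem repr_lie_b3_one (hb : IsS42Basis_s12 b) (x : L) :
    b.repr ⁅b 3, x⁆ 1 = b.repr x 1 + b.repr x 2 := by
  simp [hb.lie_b3_eq]

theorem repr_lie_b3_two (hb : IsS42Basis_s12 b) (x : L) : b.repr ⁅b 3, x⁆ 2 = b.repr x 2 := by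
  simp [hb.lie_b3_eq]

theorem repr_lie_b3_three (hb : IsS42Basis_s12 b) (x : L) : b.repr ⁅b 3, x⁆ 3 = 0 := by
  simp [hb.lie_b3_eq]

theorem lie_eq_lie_b3 (hb : IsS42Basis_s12 b) (x y : L) :
    ⁅x, y⁆ = ⁅b 3, b.repr x 3 • y - b.repr y 3 • x⁆ := by
  have h10 : ⁅b 1, b 0⁆ = 0 := by rw [← lie_skew, hb.lie_b0_b1, neg_zero]
  have h20 : ⁅b 2, b 0⁆ = 0 := by rw [← lie_skew, hb.lie_b0_b2, neg_zero]
  have h21 : ⁅b 2, b 1⁆ = 0 := by rw [← lie_skew, hb.lie_b1_b2, neg_zero]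
  rw [lie_sub, lie_smul, lie_smul, hb.lie_b3_eq x, hb.lie_b3_eq y]
  conv_lhs => rw [b.eq_sum_repr_fin_four x, b.eq_sum_repr_fin_four y]
  simp only [add_lie, lie_add, smul_lie, lie_smul, lie_self, hb.lie_b0_b1, hb.lie_b0_b2,
    hb.lie_b0_b3, hb.lie_b1_b2, hb.lie_b1_b3, hb.lie_b2_b3, hb.lie_b3_b0, hb.lie_b3_b1,
    hb.lie_b3_b2, h10, h20, h21]
  module

theorem repr_lie_three (hb : IsS42Basis_s12 b) (x y : L) : b.repr ⁅x, y⁆ 3 = 0 := by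
  rw [hb.lie_eq_lie_b3, hb.repr_lie_b3_three]

theorem exists_lie_b3_eq (hb : IsS42Basis_s12 b) {i : Fin 4} (hi : i ≠ 3) : ∃ y, ⁅b 3, y⁆ = b i := by
  fin_cases i
  · exact ⟨b 0, hb.lie_b3_b0⟩
  · exact ⟨b 1 - b 0, by rw [lie_sub, hb.lie_b3_b0, hb.lie_b3_b1]; abel⟩
  · exact ⟨b 2 - b 1 + b 0, by
      rw [lie_add, lie_sub, hb.lie_b3_b0, hb.lie_b3_b1, hb.lie_b3_b2]; abel⟩
  · exact absurd rfl hi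

-- `ad (b 3)` is unipotent on `span (b 0, b 1, b 2)`, so `s⁻¹` is not an eigenvalue of it.
theorem eq_zero_of_eq_smul_lie_b3 [IsDomain K] (hb : IsS42Basis_s12 b) {s : K} (hs : s ≠ 1) {v : L}
    (hv : b.repr v 3 = 0) (h : v = s • ⁅b 3, v⁆) : v = 0 := by
  have e0 := congrArg (b.repr · 0) h
  have e1 := congrArg (b.repr · 1) h
  have e2 := congrArg (b.repr · 2) h
  simp only [map_smul, Finsupp.smul_apply, smul_eq_mul, hb.repr_lie_b3_zero, hb.repr_lie_b3_one,
    hb.repr_lie_b3_two] at e0 e1 e2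
  have h1s : 1 - s ≠ 0 := sub_ne_zero.mpr hs.symm
  have v2 : b.repr v 2 = 0 := mul_left_cancel₀ h1s (by linear_combination e2)
  have v1 : b.repr v 1 = 0 := mul_left_cancel₀ h1s (by linear_combination e1 + s * v2)
  have v0 : b.repr v 0 = 0 := mul_left_cancel₀ h1s (by linear_combination e0 + s * v1)
  rw [b.eq_sum_repr_fin_four v, v0, v1, v2, hv]
  simp

section Endomorphism

variable {f : L →ₗ[K] L}

theorem repr_map_three_eq_zero_of_ne (hb : IsS42Basis_s12 b) (hf : ∀ x y, f ⁅x, y⁆ = ⁅f x, f y⁆)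
    {i : Fin 4} (hi : i ≠ 3) : b.repr (f (b i)) 3 = 0 := by
  obtain ⟨y, hy⟩ := hb.exists_lie_b3_eq hi
  rw [← hy, hf, hb.repr_lie_three]

theorem map_lie_b3_of_repr_three_eq_zero (hb : IsS42Basis_s12 b)
    (hf : ∀ x y, f ⁅x, y⁆ = ⁅f x, f y⁆) {z : L} (hz : b.repr (f z) 3 = 0) :
    f ⁅b 3, z⁆ = b.repr (f (b 3)) 3 • ⁅b 3, f z⁆ := by
  rw [hf, hb.lie_eq_lie_b3, hz, zero_smul, sub_zero, lie_smul]

theorem repr_map_b3_three [IsDomain K] (hb : IsS42Basis_s12 b)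
    (hf : ∀ x y, f ⁅x, y⁆ = ⁅f x, f y⁆) (hinj : Function.Injective f) :
    b.repr (f (b 3)) 3 = 1 := by
  by_contra hs
  have h0 : b.repr (f (b 0)) 3 = 0 := hb.repr_map_three_eq_zero_of_ne hf (by decide)
  have hf0 : f (b 0) = 0 := hb.eq_zero_of_eq_smul_lie_b3 hs h0 <| by
    rw [← hb.map_lie_b3_of_repr_three_eq_zero hf h0, hb.lie_b3_b0]
  exact b.ne_zero 0 (hinj (by rw [hf0, map_zero]))

theorem repr_map_three [IsDomain K] (hb : IsS42Basis_s12 b) (hf : ∀ x y, f ⁅x, y⁆ = ⁅f x, f y⁆)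
    (hinj : Function.Injective f) (x : L) : b.repr (f x) 3 = b.repr x 3 := by
  have h0 : b.repr (f (b 0)) 3 = 0 := hb.repr_map_three_eq_zero_of_ne hf (by decide)
  have h1 : b.repr (f (b 1)) 3 = 0 := hb.repr_map_three_eq_zero_of_ne hf (by decide)
  have h2 : b.repr (f (b 2)) 3 = 0 := hb.repr_map_three_eq_zero_of_ne hf (by decide)
  conv_lhs => rw [b.eq_sum_repr_fin_four x]
  simp [h0, h1, h2, hb.repr_map_b3_three hf hinj]

theorem map_lie_iff [IsDomain K] (hb : IsS42Basis_s12 b) (hinj : Function.Injective f) :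
    (∀ x y, f ⁅x, y⁆ = ⁅f x, f y⁆) ↔
      (∀ x, b.repr (f x) 3 = b.repr x 3) ∧
        ∀ z, b.repr z 3 = 0 → f ⁅b 3, z⁆ = ⁅b 3, f z⁆ := by
  refine ⟨fun hf => ⟨hb.repr_map_three hf hinj, fun z hz => ?_⟩, fun ⟨hP, hC⟩ x y => ?_⟩
  · rw [hb.map_lie_b3_of_repr_three_eq_zero hf (by rw [hb.repr_map_three hf hinj, hz]),
      hb.repr_map_b3_three hf hinj, one_smul]
  · rw [hb.lie_eq_lie_b3 x y, hC _ (by simp [mul_comm]), map_sub, map_smul, map_smul,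
      hb.lie_eq_lie_b3 (f x), hP, hP]

theorem repr_map_three_and_map_lie_b3_iff (hb : IsS42Basis_s12 b) :
    ((∀ x, b.repr (f x) 3 = b.repr x 3) ∧ ∀ z, b.repr z 3 = 0 → f ⁅b 3, z⁆ = ⁅b 3, f z⁆) ↔
      ∃ a bb c p q r : K,
        f (b 0) = a • b 0 ∧
        f (b 1) = bb • b 0 + a • b 1 ∧
        f (b 2) = c • b 0 + bb • b 1 + a • b 2 ∧
        f (b 3) = p • b 0 + q • b 1 + r • b 2 + b 3 := by
  constructor
  · rintro ⟨hP, hC⟩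
    have hD : ∀ i, i ≠ 3 → b.repr (f (b i)) 3 = 0 := fun i hi => by
      rw [hP, b.repr_self, Finsupp.single_eq_of_ne hi.symm]
    have c0 : f (b 0) = ⁅b 3, f (b 0)⁆ := by rw [← hC _ (by simp), hb.lie_b3_b0]
    have c1 : f (b 0) + f (b 1) = ⁅b 3, f (b 1)⁆ := by
      rw [← hC _ (by simp), hb.lie_b3_b1, map_add]
    have c2 : f (b 1) + f (b 2) = ⁅b 3, f (b 2)⁆ := by
      rw [← hC _ (by simp), hb.lie_b3_b2, map_add]
    have c00 := congrArg (b.repr · 0) c0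
    have c01 := congrArg (b.repr · 1) c0
    have c10 := congrArg (b.repr · 0) c1
    have c11 := congrArg (b.repr · 1) c1
    have c20 := congrArg (b.repr · 0) c2
    have c21 := congrArg (b.repr · 1) c2
    simp only [map_add, Finsupp.add_apply, hb.repr_lie_b3_zero, hb.repr_lie_b3_one]
      at c00 c01 c10 c11 c20 c21
    have hu1 : b.repr (f (b 0)) 1 = 0 := by linear_combination -c00
    have hu2 : b.repr (f (b 0)) 2 = 0 := by linear_combination -c01
    have hv1 : b.repr (f (b 1)) 1 = b.repr (f (b 0)) 0 := by linear_combination -c10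
    have hv2 : b.repr (f (b 1)) 2 = 0 := by linear_combination -c11 + hu1
    have hw1 : b.repr (f (b 2)) 1 = b.repr (f (b 1)) 0 := by linear_combination -c20
    have hw2 : b.repr (f (b 2)) 2 = b.repr (f (b 0)) 0 := by linear_combination -c21 + hv1
    refine ⟨b.repr (f (b 0)) 0, b.repr (f (b 1)) 0, b.repr (f (b 2)) 0,
      b.repr (f (b 3)) 0, b.repr (f (b 3)) 1, b.repr (f (b 3)) 2, ?_, ?_, ?_, ?_⟩
    · conv_lhs => rw [b.eq_sum_repr_fin_four (f (b 0))]
      rw [hu1, hu2, hD 0 (by decide)]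
      simp
    · conv_lhs => rw [b.eq_sum_repr_fin_four (f (b 1))]
      rw [hv1, hv2, hD 1 (by decide)]
      simp
    · conv_lhs => rw [b.eq_sum_repr_fin_four (f (b 2))]
      rw [hw1, hw2, hD 2 (by decide)]
      simp
    · conv_lhs => rw [b.eq_sum_repr_fin_four (f (b 3))]
      rw [hP, b.repr_self, Finsupp.single_eq_same, one_smul]
  · rintro ⟨a, bb, c, p, q, r, h0, h1, h2, h3⟩
    refine ⟨fun x => ?_, fun z hz => ?_⟩
    · conv_lhs => rw [b.eq_sum_repr_fin_four x]
      simp [h0, h1, h2, h3]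
    · rw [b.eq_sum_repr_fin_four z, hz, zero_smul, add_zero]
      simp only [lie_add, lie_smul, map_add, map_smul, h0, h1, h2, hb.lie_b3_b0, hb.lie_b3_b1,
        hb.lie_b3_b2]
      module

end Endomorphism

end IsS42Basis_s12

/-- Characterization of the Lie algebra automorphisms of the real 4-dimensional Lie
algebra `s₂` (Šnobl–Winternitz `s_{4,2}`), with basis `e₁ = b 0, …, e₄ = b 3` and
nonzero brackets `⁅e₁, e₄⁆ = -e₁`, `⁅e₂, e₄⁆ = -e₁ - e₂`, `⁅e₃, e₄⁆ = -e₂ - e₃`. -/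
theorem stmt_12 {L : Type*} [LieRing L] [LieAlgebra ℝ L]
    (b : Module.Basis (Fin 4) ℝ L)
    (h12 : ⁅b 0, b 1⁆ = 0) (h13 : ⁅b 0, b 2⁆ = 0) (h14 : ⁅b 0, b 3⁆ = -b 0)
    (h23 : ⁅b 1, b 2⁆ = 0) (h24 : ⁅b 1, b 3⁆ = -b 0 - b 1) (h34 : ⁅b 2, b 3⁆ = -b 1 - b 2)
    (T : L ≃ₗ[ℝ] L) :
    (∀ x y : L, T ⁅x, y⁆ = ⁅T x, T y⁆) ↔
      ∃ a bb c p q r : ℝ, a ≠ 0 ∧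
        T (b 0) = a • b 0 ∧
        T (b 1) = bb • b 0 + a • b 1 ∧
        T (b 2) = c • b 0 + bb • b 1 + a • b 2 ∧
        T (b 3) = p • b 0 + q • b 1 + r • b 2 + b 3 := by
  have hb : IsS42Basis_s12 b := ⟨h12, h13, h14, h23, h24, h34⟩
  refine (hb.map_lie_iff (f := T.toLinearMap) T.injective).trans <|
    hb.repr_map_three_and_map_lie_b3_iff.trans
      ⟨fun ⟨a, bb, c, p, q, r, h0, h⟩ => ⟨a, bb, c, p, q, r, ?_, h0, h⟩,
        fun ⟨a, bb, c, p, q, r, _, h⟩ => ⟨a, bb, c, p, q, r, h⟩⟩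
  rintro rfl
  exact b.ne_zero 0 (T.injective (by simpa using h0))
end

section
/- Let n₁ be the real 4-dimensional Lie algebra with basis e₁, e₂, e₃, e₄ and nonzero brackets ⁅e₂, e₄⁆ = e₁ and ⁅e₃, e₄⁆ = e₂ (all other brackets of basis elements zero, extended bilinearly and antisymmetrically). A linear endomorphism D of n₁ is a derivation of n₁ if and only if there exist real numbers μ₁₁, μ₁₂, μ₁₃, μ₁₄, μ₂₂, μ₂₄, μ₃₄ such that D e₁ = μ₁₁ e₁, D e₂ = μ₁₂ e₁ + μ₂₂ e₂, D e₃ = μ₁₃ e₁ + μ₁₂ e₂ + (2μ₂₂ − μ₁₁) e₃, and D e₄ = μ₁₄ e₁ + μ₂₄ e₂ + μ₃₄ e₃ + (μ₁₁ − μ₂₂) e₄. -/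
/-!
Both sides of the Leibniz rule are bilinear and change sign when the arguments are swapped, so it
suffices to check it on basis pairs `b i, b j` with `i < j`. In coordinates the bracket is
`⁅x, y⁆ = (x₁ y₃ - x₃ y₁) • b 0 + (x₂ y₃ - x₃ y₂) • b 1`, and the coordinates of the Leibniz rule on
those pairs form a linear system in the matrix entries of `D` whose solutions are exactly the stated
family.
-/

open Module

section

variable {R L : Type*} [CommRing R] [LieRing L] [LieAlgebra R L]

theorem leibniz_of_basis {ι : Type*} (b : Basis ι R L) (D : L →ₗ[R] L)
    (h : ∀ i j, D ⁅b i, b j⁆ = ⁅D (b i), b j⁆ + ⁅b i, D (b j)⁆) (x y : L) :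
    D ⁅x, y⁆ = ⁅D x, y⁆ + ⁅x, D y⁆ := by
  let bracket : L →ₗ[R] L →ₗ[R] L := LieModule.toEnd R L L
  have := LinearMap.ext_basis (B := bracket.compr₂ D) (B' := bracket ∘ₗ D + bracket.compl₂ D) b b
    (by simpa [bracket] using h)
  simpa [bracket] using LinearMap.congr_fun₂ this x y

theorem leibniz_swap {D : L →ₗ[R] L} {x y : L} (h : D ⁅x, y⁆ = ⁅D x, y⁆ + ⁅x, D y⁆) :
    D ⁅y, x⁆ = ⁅D y, x⁆ + ⁅y, D x⁆ := by
  rw [← lie_skew, map_neg, h, ← lie_skew (D x), ← lie_skew x]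
  abel

theorem leibniz_iff_of_lt {ι : Type*} [LinearOrder ι] (b : Basis ι R L) (D : L →ₗ[R] L) :
    (∀ x y : L, D ⁅x, y⁆ = ⁅D x, y⁆ + ⁅x, D y⁆) ↔
      ∀ i j, i < j → D ⁅b i, b j⁆ = ⁅D (b i), b j⁆ + ⁅b i, D (b j)⁆ := by
  refine ⟨fun h i j _ => h _ _, fun h => leibniz_of_basis b D fun i j => ?_⟩
  rcases lt_trichotomy i j with hij | rfl | hji
  · exact h i j hij
  · simp only [lie_self, map_zero, ← lie_skew (D (b i)), neg_add_cancel]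
  · exact leibniz_swap (h j i hji)

structure IsN41Basis (b : Basis (Fin 4) R L) : Prop where
  lie_zero_one : ⁅b 0, b 1⁆ = 0
  lie_zero_two : ⁅b 0, b 2⁆ = 0
  lie_zero_three : ⁅b 0, b 3⁆ = 0
  lie_one_two : ⁅b 1, b 2⁆ = 0
  lie_one_three : ⁅b 1, b 3⁆ = b 0
  lie_two_three : ⁅b 2, b 3⁆ = b 1

namespace IsN41Basis

variable {b : Basis (Fin 4) R L}

theorem lie_eq (hb : IsN41Basis b) (x y : L) :
    ⁅x, y⁆ = (b.repr x 1 * b.repr y 3 - b.repr x 3 * b.repr y 1) • b 0 +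
      (b.repr x 2 * b.repr y 3 - b.repr x 3 * b.repr y 2) • b 1 := by
  have expand : ∀ z : L, z = ∑ i, b.repr z i • b i := fun z => (b.sum_repr z).symm
  conv_lhs => rw [expand x, expand y]
  simp only [Fin.sum_univ_four, lie_add, add_lie, smul_lie, lie_smul, lie_self, hb.lie_zero_one,
    hb.lie_zero_two, hb.lie_zero_three, hb.lie_one_two, hb.lie_one_three, hb.lie_two_three,
    ← lie_skew (b 1) (b 0), ← lie_skew (b 2) (b 0), ← lie_skew (b 3) (b 0),
    ← lie_skew (b 2) (b 1), ← lie_skew (b 3) (b 1), ← lie_skew (b 3) (b 2)]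
  module

theorem repr_lie (hb : IsN41Basis b) (x y : L) (k : Fin 4) :
    b.repr ⁅x, y⁆ k = ![b.repr x 1 * b.repr y 3 - b.repr x 3 * b.repr y 1,
      b.repr x 2 * b.repr y 3 - b.repr x 3 * b.repr y 2, 0, 0] k := by
  rw [hb.lie_eq]
  fin_cases k <;> simp

theorem leibniz_iff (hb : IsN41Basis b) (D : L →ₗ[R] L) :
    (∀ x y : L, D ⁅x, y⁆ = ⁅D x, y⁆ + ⁅x, D y⁆) ↔
      ∃ μ11 μ12 μ13 μ14 μ22 μ24 μ34 : R,
        D (b 0) = μ11 • b 0 ∧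
        D (b 1) = μ12 • b 0 + μ22 • b 1 ∧
        D (b 2) = μ13 • b 0 + μ12 • b 1 + (2 * μ22 - μ11) • b 2 ∧
        D (b 3) = μ14 • b 0 + μ24 • b 1 + μ34 • b 2 + (μ11 - μ22) • b 3 := by
  rw [leibniz_iff_of_lt b D]
  constructor
  · intro hD
    have coord : ∀ i j k, i < j → b.repr (D ⁅b i, b j⁆) k =
        b.repr ⁅D (b i), b j⁆ k + b.repr ⁅b i, D (b j)⁆ k := fun i j k hij => by
      rw [hD i j hij, map_add, Finsupp.add_apply]
    -- `hijk` is coordinate `k` of the Leibniz rule on `b i, b j`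
    have h030 := coord 0 3 0 (by decide)
    have h031 := coord 0 3 1 (by decide)
    have h010 := coord 0 1 0 (by decide)
    have h120 := coord 1 2 0 (by decide)
    have h121 := coord 1 2 1 (by decide)
    have h130 := coord 1 3 0 (by decide)
    have h131 := coord 1 3 1 (by decide)
    have h230 := coord 2 3 0 (by decide)
    have h231 := coord 2 3 1 (by decide)
    simp [hb.repr_lie, hb.lie_zero_one, hb.lie_zero_three, hb.lie_one_two, hb.lie_one_three,
      hb.lie_two_three] at h030 h031 h010 h120 h121 h130 h131 h230 h231
    refine ⟨b.repr (D (b 0)) 0, b.repr (D (b 1)) 0, b.repr (D (b 2)) 0, b.repr (D (b 3)) 0,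
      b.repr (D (b 1)) 1, b.repr (D (b 3)) 1, b.repr (D (b 3)) 2, ?_, ?_, ?_, ?_⟩ <;>
    refine b.ext_elem fun k => ?_ <;> fin_cases k <;> simp <;> grind
  · rintro ⟨μ11, μ12, μ13, μ14, μ22, μ24, μ34, hd0, hd1, hd2, hd3⟩ i j hij
    fin_cases i <;> fin_cases j <;> simp at hij <;> simp [hb.lie_eq, hd0, hd1, hd2, hd3] <;> module

end IsN41Basis

end

/-- Characterization of the derivations of the real 4-dimensional nilpotent Lie
algebra `n₁` (Šnobl–Winternitz `n_{4,1}`), with basis `e₁ = b 0, …, e₄ = b 3` and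
nonzero brackets `⁅e₂, e₄⁆ = e₁`, `⁅e₃, e₄⁆ = e₂`. -/
theorem stmt_13 {L : Type*} [LieRing L] [LieAlgebra ℝ L]
    (b : Module.Basis (Fin 4) ℝ L)
    (h12 : ⁅b 0, b 1⁆ = 0) (h13 : ⁅b 0, b 2⁆ = 0) (h14 : ⁅b 0, b 3⁆ = 0)
    (h23 : ⁅b 1, b 2⁆ = 0) (h24 : ⁅b 1, b 3⁆ = b 0) (h34 : ⁅b 2, b 3⁆ = b 1)
    (D : L →ₗ[ℝ] L) :
    (∀ x y : L, D ⁅x, y⁆ = ⁅D x, y⁆ + ⁅x, D y⁆) ↔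
      ∃ μ11 μ12 μ13 μ14 μ22 μ24 μ34 : ℝ,
        D (b 0) = μ11 • b 0 ∧
        D (b 1) = μ12 • b 0 + μ22 • b 1 ∧
        D (b 2) = μ13 • b 0 + μ12 • b 1 + (2 * μ22 - μ11) • b 2 ∧
        D (b 3) = μ14 • b 0 + μ24 • b 1 + μ34 • b 2 + (μ11 - μ22) • b 3 :=
  (IsN41Basis.mk h12 h13 h14 h23 h24 h34).leibniz_iff D
end

section
/- Let s₁₂ be the real 4-dimensional Lie algebra with basis e₁, e₂, e₃, e₄ and nonzero brackets ⁅e₁, e₃⁆ = −e₁, ⁅e₁, e₄⁆ = e₂, ⁅e₂, e₃⁆ = −e₂, ⁅e₂, e₄⁆ = −e₁ (all other brackets of basis elements zero, extended bilinearly and antisymmetrically). A linear endomorphism D of s₁₂ is a derivation of s₁₂ if and only if there exist real numbers μ₁₁, μ₁₂, μ₁₃, μ₁₄ such that D e₁ = μ₁₁ e₁ − μ₁₂ e₂, D e₂ = μ₁₂ e₁ + μ₁₁ e₂, D e₃ = μ₁₃ e₁ + μ₁₄ e₂, and D e₄ = μ₁₄ e₁ − μ₁₃ e₂. -/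
/-!
Every derivation of `s₁₂` is inner: the maps in the statement are exactly
`ad (μ₁₁ e₃ + μ₁₂ e₄ - μ₁₃ e₁ - μ₁₄ e₂)`, which are derivations by the Jacobi identity.
Conversely, the Leibniz rule on the pairs `(eᵢ, e₃)`, `(eᵢ, e₄)` for `i = 1, 2` and on `(e₃, e₄)`,
read in coordinates, pins `D` down. The `e₃`- and `e₄`-coordinates of `D e₄` enter these equations
only doubled, which is where `2 ≠ 0` is needed. (In the code `eᵢ` is `b (i - 1)`.)
-/

open LieAlgebra

lemma Module.Basis.lie_eq_sum_repr {ι R L M : Type*} [Fintype ι] [CommRing R] [LieRing L]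
    [LieAlgebra R L] [AddCommGroup M] [Module R M] [LieRingModule L M] [LieModule R L M]
    (b : Module.Basis ι R M) (x : L) (m : M) :
    ⁅x, m⁆ = ∑ i, b.repr m i • ⁅x, b i⁆ := by
  conv_lhs => rw [← b.sum_repr m]
  simp only [lie_sum, lie_smul]

structure IsS12Basis {R L : Type*} [CommRing R] [LieRing L] [LieAlgebra R L]
    (b : Module.Basis (Fin 4) R L) : Prop where
  lie_01 : ⁅b 0, b 1⁆ = 0
  lie_02 : ⁅b 0, b 2⁆ = -b 0
  lie_03 : ⁅b 0, b 3⁆ = b 1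
  lie_12 : ⁅b 1, b 2⁆ = -b 1
  lie_13 : ⁅b 1, b 3⁆ = -b 0
  lie_23 : ⁅b 2, b 3⁆ = 0

namespace IsS12Basis

section CommRing

variable {R L : Type*} [CommRing R] [LieRing L] [LieAlgebra R L] {b : Module.Basis (Fin 4) R L}

lemma lie_10 (hb : IsS12Basis b) : ⁅b 1, b 0⁆ = 0 := by rw [← lie_skew, hb.lie_01, neg_zero]
lemma lie_20 (hb : IsS12Basis b) : ⁅b 2, b 0⁆ = b 0 := by rw [← lie_skew, hb.lie_02, neg_neg]
lemma lie_30 (hb : IsS12Basis b) : ⁅b 3, b 0⁆ = -b 1 := by rw [← lie_skew, hb.lie_03]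
lemma lie_21 (hb : IsS12Basis b) : ⁅b 2, b 1⁆ = b 1 := by rw [← lie_skew, hb.lie_12, neg_neg]
lemma lie_31 (hb : IsS12Basis b) : ⁅b 3, b 1⁆ = b 0 := by rw [← lie_skew, hb.lie_13, neg_neg]
lemma lie_32 (hb : IsS12Basis b) : ⁅b 3, b 2⁆ = 0 := by rw [← lie_skew, hb.lie_23, neg_zero]

lemma lie_basis_zero (hb : IsS12Basis b) (x : L) :
    ⁅b 0, x⁆ = b.repr x 3 • b 1 - b.repr x 2 • b 0 := by
  rw [b.lie_eq_sum_repr, Fin.sum_univ_four, lie_self, hb.lie_01, hb.lie_02, hb.lie_03]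
  module

lemma lie_basis_one (hb : IsS12Basis b) (x : L) :
    ⁅b 1, x⁆ = -(b.repr x 3 • b 0 + b.repr x 2 • b 1) := by
  rw [b.lie_eq_sum_repr, Fin.sum_univ_four, lie_self, hb.lie_10, hb.lie_12, hb.lie_13]
  module

lemma lie_basis_two (hb : IsS12Basis b) (x : L) :
    ⁅b 2, x⁆ = b.repr x 0 • b 0 + b.repr x 1 • b 1 := by
  rw [b.lie_eq_sum_repr, Fin.sum_univ_four, lie_self, hb.lie_20, hb.lie_21, hb.lie_23]
  module

lemma lie_basis_three (hb : IsS12Basis b) (x : L) :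
    ⁅b 3, x⁆ = b.repr x 1 • b 0 - b.repr x 0 • b 1 := by
  rw [b.lie_eq_sum_repr, Fin.sum_univ_four, lie_self, hb.lie_30, hb.lie_31, hb.lie_32]
  module

lemma eq_ad_of_apply_basis (hb : IsS12Basis b) {D : L →ₗ[R] L} {μ₁ μ₂ μ₃ μ₄ : R}
    (h0 : D (b 0) = μ₁ • b 0 - μ₂ • b 1) (h1 : D (b 1) = μ₂ • b 0 + μ₁ • b 1)
    (h2 : D (b 2) = μ₃ • b 0 + μ₄ • b 1) (h3 : D (b 3) = μ₄ • b 0 - μ₃ • b 1) :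
    D = ad R L (μ₁ • b 2 + μ₂ • b 3 - μ₃ • b 0 - μ₄ • b 1) := by
  refine b.ext fun i => ?_
  fin_cases i <;>
  simp only [Fin.zero_eta, Fin.mk_one, Fin.reduceFinMk, ad_apply, sub_lie, add_lie, smul_lie,
    lie_self, hb.lie_01, hb.lie_02, hb.lie_03, hb.lie_12, hb.lie_13, hb.lie_23, hb.lie_10,
    hb.lie_20, hb.lie_30, hb.lie_21, hb.lie_31, hb.lie_32, h0, h1, h2, h3] <;>
  module

end CommRing

variable {K L : Type*} [Field K] [NeZero (2 : K)] [LieRing L] [LieAlgebra K L]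
  {b : Module.Basis (Fin 4) K L}

lemma exists_apply_basis_eq_of_leibniz (hb : IsS12Basis b) {D : L →ₗ[K] L}
    (hD : ∀ x y : L, D ⁅x, y⁆ = ⁅D x, y⁆ + ⁅x, D y⁆) :
    ∃ μ₁ μ₂ μ₃ μ₄ : K,
      D (b 0) = μ₁ • b 0 - μ₂ • b 1 ∧ D (b 1) = μ₂ • b 0 + μ₁ • b 1 ∧
      D (b 2) = μ₃ • b 0 + μ₄ • b 1 ∧ D (b 3) = μ₄ • b 0 - μ₃ • b 1 := by
  set d : Fin 4 → Fin 4 → K := fun i j => b.repr (D (b i)) j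
  have e02 := hD (b 0) (b 2)
  have e12 := hD (b 1) (b 2)
  have e03 := hD (b 0) (b 3)
  have e13 := hD (b 1) (b 3)
  have e23 := hD (b 2) (b 3)
  rw [hb.lie_02, map_neg, ← lie_skew (D (b 0)), hb.lie_basis_two, hb.lie_basis_zero] at e02
  rw [hb.lie_12, map_neg, ← lie_skew (D (b 1)), hb.lie_basis_two, hb.lie_basis_one] at e12
  rw [hb.lie_03, ← lie_skew (D (b 0)), hb.lie_basis_three, hb.lie_basis_zero] at e03
  rw [hb.lie_13, map_neg, ← lie_skew (D (b 1)), hb.lie_basis_three, hb.lie_basis_one] at e13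
  rw [hb.lie_23, map_zero, ← lie_skew (D (b 2)), hb.lie_basis_three, hb.lie_basis_two] at e23
  obtain ⟨h22, h23, h02, h03⟩ : d 2 2 = 0 ∧ d 2 3 = 0 ∧ d 0 2 = 0 ∧ d 0 3 = 0 := by
    simpa [b.ext_elem_iff, Fin.forall_fin_succ, Finsupp.single_apply] using e02
  obtain ⟨-, -, h12, h13⟩ : d 2 3 = 0 ∧ d 2 2 = 0 ∧ d 1 2 = 0 ∧ d 1 3 = 0 := by
    simpa [b.ext_elem_iff, Fin.forall_fin_succ, Finsupp.single_apply] using e12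
  obtain ⟨h10, h11, -, -⟩ :
      d 1 0 = -d 0 1 - d 3 2 ∧ d 1 1 = d 0 0 + d 3 3 ∧ d 1 2 = 0 ∧ d 1 3 = 0 := by
    simpa [b.ext_elem_iff, Fin.forall_fin_succ, Finsupp.single_apply, sub_eq_add_neg] using e03
  obtain ⟨h00, h01, -, -⟩ :
      -d 0 0 = -d 1 1 - d 3 3 ∧ -d 0 1 = d 1 0 - d 3 2 ∧ d 0 2 = 0 ∧ d 0 3 = 0 := by
    simpa [b.ext_elem_iff, Fin.forall_fin_succ, Finsupp.single_apply, sub_eq_add_neg] using e13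
  obtain ⟨h30, h31⟩ : 0 = -d 2 1 + d 3 0 ∧ 0 = d 2 0 + d 3 1 := by
    simpa [b.ext_elem_iff, Fin.forall_fin_succ, Finsupp.single_apply] using e23
  have h32 : d 3 2 = 0 :=
    (mul_eq_zero.mp (by linear_combination h10 + h01)).resolve_left two_ne_zero
  have h33 : d 3 3 = 0 :=
    (mul_eq_zero.mp (by linear_combination h00 - h11)).resolve_left two_ne_zero
  have hDb (i : Fin 4) : D (b i) = d i 0 • b 0 + d i 1 • b 1 + d i 2 • b 2 + d i 3 • b 3 :=
    (b.sum_repr (D (b i))).symm.trans (Fin.sum_univ_four _)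
  refine ⟨d 0 0, -d 0 1, d 2 0, d 2 1, ?_, ?_, ?_, ?_⟩ <;> rw [hDb]
  · linear_combination (norm := module) h02 • b 2 + h03 • b 3
  · linear_combination (norm := module)
      (h10 - h32) • b 0 + (h11 + h33) • b 1 + h12 • b 2 + h13 • b 3
  · linear_combination (norm := module) h22 • b 2 + h23 • b 3
  · linear_combination (norm := module) (-h30) • b 0 - h31 • b 1 + h32 • b 2 + h33 • b 3

end IsS12Basis

/-- Characterization of the derivations of the real 4-dimensional Lie algebra `s₁₂`
(Šnobl–Winternitz `s_{4,12}`), with basis `e₁ = b 0, …, e₄ = b 3` and nonzero brackets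
`⁅e₁, e₃⁆ = -e₁`, `⁅e₁, e₄⁆ = e₂`, `⁅e₂, e₃⁆ = -e₂`, `⁅e₂, e₄⁆ = -e₁`. -/
theorem stmt_15 {L : Type*} [LieRing L] [LieAlgebra ℝ L]
    (b : Module.Basis (Fin 4) ℝ L)
    (h12 : ⁅b 0, b 1⁆ = 0) (h13 : ⁅b 0, b 2⁆ = -b 0) (h14 : ⁅b 0, b 3⁆ = b 1)
    (h23 : ⁅b 1, b 2⁆ = -b 1) (h24 : ⁅b 1, b 3⁆ = -b 0) (h34 : ⁅b 2, b 3⁆ = 0)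
    (D : L →ₗ[ℝ] L) :
    (∀ x y : L, D ⁅x, y⁆ = ⁅D x, y⁆ + ⁅x, D y⁆) ↔
      ∃ μ11 μ12 μ13 μ14 : ℝ,
        D (b 0) = μ11 • b 0 - μ12 • b 1 ∧
        D (b 1) = μ12 • b 0 + μ11 • b 1 ∧
        D (b 2) = μ13 • b 0 + μ14 • b 1 ∧
        D (b 3) = μ14 • b 0 - μ13 • b 1 := by
  have hb : IsS12Basis b := ⟨h12, h13, h14, h23, h24, h34⟩
  refine ⟨hb.exists_apply_basis_eq_of_leibniz, ?_⟩
  rintro ⟨μ11, μ12, μ13, μ14, h0, h1, h2, h3⟩ x y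
  rw [hb.eq_ad_of_apply_basis h0 h1 h2 h3]
  exact leibniz_lie _ _ _
end

section
/- Let s₁ be the real 4-dimensional Lie algebra with basis e₁, e₂, e₃, e₄ and nonzero brackets ⁅e₂, e₄⁆ = −e₁ and ⁅e₃, e₄⁆ = −e₃ (all other brackets of basis elements zero, extended bilinearly and antisymmetrically). An antisymmetric tensor w ∈ s₁ ⊗[ℝ] s₁ (i.e. one satisfying (swap) w = −w, where swap is the canonical flip of the two tensor factors) is s₁-invariant — that is, ⁅v, w⁆ = 0 for all v ∈ s₁ under the canonical action of s₁ on s₁ ⊗ s₁ — if and only if w is a real scalar multiple of e₁ ⊗ e₂ − e₂ ⊗ e₁. -/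
/-!
Write `w = ∑ cᵢⱼ eᵢ ⊗ eⱼ`. Antisymmetry says `C = (cᵢⱼ)` is skew, and invariance under `x` says
`ad(x) C + C ad(x)ᵀ = 0`. For `x = e₄` (where `ad e₄` sends `e₂ ↦ e₁`, `e₃ ↦ e₃`) the entries
`(2,3), (1,4), (3,4), (1,3)` of this equation give `c₂₃ = c₂₄ = c₃₄ = c₁₃ = 0`, and for `x = e₃`
(where `ad e₃` sends `e₄ ↦ -e₃`) the entry `(1,3)` gives `c₁₄ = 0`; so only `c₁₂ = -c₂₁` survives.
Conversely `e₁` is central and `⁅v, e₂⁆ = t e₁` for some `t`, so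
`⁅v, e₁ ⊗ e₂ - e₂ ⊗ e₁⁆ = e₁ ⊗ t e₁ - t e₁ ⊗ e₁ = 0`.
-/

open TensorProduct

namespace Module.Basis

variable {R M N ι κ : Type*} [CommRing R] [AddCommGroup M] [Module R M]
  [AddCommGroup N] [Module R N]

theorem tensorProduct_repr_comm (b : Basis ι R M) (c : Basis κ R N) (w : M ⊗[R] N)
    (i : ι) (j : κ) :
    (c.tensorProduct b).repr (TensorProduct.comm R M N w) (j, i) =
      (b.tensorProduct c).repr w (i, j) := by
  induction w using TensorProduct.induction_on with
  | zero => simp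
  | tmul x y => simp [tensorProduct_repr_tmul_apply, mul_comm]
  | add x y hx hy => simp [hx, hy]

theorem tensorProduct_repr_swap_of_comm_eq_neg (b : Basis ι R M) {w : M ⊗[R] M}
    (hw : TensorProduct.comm R M M w = -w) (i j : ι) :
    (b.tensorProduct b).repr w (j, i) = -(b.tensorProduct b).repr w (i, j) := by
  rw [← tensorProduct_repr_comm, hw, map_neg, Finsupp.neg_apply]

variable {L : Type*} [LieRing L] [LieAlgebra R L] [LieRingModule L M] [LieModule R L M]
  [LieRingModule L N] [LieModule R L N]

theorem repr_lie [Fintype ι] (b : Basis ι R M) (x : L) (m : M) (i : ι) :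
    b.repr ⁅x, m⁆ i = ∑ k, b.repr ⁅x, b k⁆ i * b.repr m k := by
  classical
  simpa [LinearMap.toMatrix_apply, Matrix.mulVec, dotProduct] using
    (congrFun (LinearMap.toMatrix_mulVec_repr b b (LieModule.toEnd R L M x) m) i).symm

theorem tensorProduct_repr_lie [Fintype ι] [Fintype κ] (b : Basis ι R M) (c : Basis κ R N)
    (x : L) (w : M ⊗[R] N) (i : ι) (j : κ) :
    (b.tensorProduct c).repr ⁅x, w⁆ (i, j) =
      ∑ k, b.repr ⁅x, b k⁆ i * (b.tensorProduct c).repr w (k, j) +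
        ∑ k, c.repr ⁅x, c k⁆ j * (b.tensorProduct c).repr w (i, k) := by
  induction w using TensorProduct.induction_on with
  | zero => simp
  | tmul m n =>
    simp only [LieModule.lie_tmul_right, map_add, Finsupp.add_apply,
      tensorProduct_repr_tmul_apply, repr_lie b x m, repr_lie c x n, smul_eq_mul,
      Finset.sum_mul, Finset.mul_sum]
    congr 1 <;> refine Finset.sum_congr rfl fun k _ => by ring
  | add w w' hw hw' =>
    simp only [lie_add, map_add, Finsupp.add_apply, hw, hw', mul_add, Finset.sum_add_distrib]
    ring

end Module.Basis

namespace TensorProduct.LieModule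

variable {R L M : Type*} [CommRing R] [LieRing L] [LieAlgebra R L] [AddCommGroup M] [Module R M]
  [LieRingModule L M] [LieModule R L M]

theorem lie_tmul_sub_tmul_eq_zero {x : L} {z y : M} (hz : ⁅x, z⁆ = 0) (hy : ⁅x, y⁆ ∈ R ∙ z) :
    ⁅x, z ⊗ₜ[R] y - y ⊗ₜ[R] z⁆ = 0 := by
  obtain ⟨t, ht⟩ := Submodule.mem_span_singleton.mp hy
  simp [lie_tmul_right, hz, ← ht, smul_tmul]

end TensorProduct.LieModule

/-- For the real 4-dimensional Lie algebra `s₁` (Šnobl–Winternitz `s_{4,1}`), an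
antisymmetric tensor `w ∈ s₁ ⊗ s₁` is `s₁`-invariant if and only if it is a real
multiple of `e₁ ⊗ e₂ - e₂ ⊗ e₁`, i.e. `(Λ²s₁)^{s₁} = ⟨e₁ ∧ e₂⟩`. -/
theorem stmt_16 {L : Type*} [LieRing L] [LieAlgebra ℝ L]
    (b : Module.Basis (Fin 4) ℝ L)
    (h12 : ⁅b 0, b 1⁆ = 0) (h13 : ⁅b 0, b 2⁆ = 0) (h14 : ⁅b 0, b 3⁆ = 0)
    (h23 : ⁅b 1, b 2⁆ = 0) (h24 : ⁅b 1, b 3⁆ = -b 0) (h34 : ⁅b 2, b 3⁆ = -b 2)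
    (w : L ⊗[ℝ] L) (hanti : TensorProduct.comm ℝ L L w = -w) :
    (∀ v : L, ⁅v, w⁆ = 0) ↔
      ∃ lam : ℝ, w = lam • (b 0 ⊗ₜ[ℝ] b 1 - b 1 ⊗ₜ[ℝ] b 0) := by
  have h21 : ⁅b 1, b 0⁆ = 0 := by rw [← lie_skew, h12, neg_zero]
  have h31 : ⁅b 2, b 0⁆ = 0 := by rw [← lie_skew, h13, neg_zero]
  have h41 : ⁅b 3, b 0⁆ = 0 := by rw [← lie_skew, h14, neg_zero]
  have h32 : ⁅b 2, b 1⁆ = 0 := by rw [← lie_skew, h23, neg_zero]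
  have h42 : ⁅b 3, b 1⁆ = b 0 := by rw [← lie_skew, h24, neg_neg]
  have h43 : ⁅b 3, b 2⁆ = b 2 := by rw [← lie_skew, h34, neg_neg]
  constructor
  · intro hinv
    have hlie (x : L) (i j : Fin 4) := (b.tensorProduct_repr_lie b x w i j).symm.trans
      (by rw [hinv, map_zero, Finsupp.zero_apply])
    have anti := b.tensorProduct_repr_swap_of_comm_eq_neg hanti
    generalize hc : (b.tensorProduct b).repr w = c at hlie anti
    have e12 : c (1, 2) = 0 := by simpa [Fin.sum_univ_four, h41, h42, h43] using hlie (b 3) 1 2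
    have e13 : c (1, 3) = 0 := by simpa [Fin.sum_univ_four, h41, h42, h43] using hlie (b 3) 0 3
    have e23 : c (2, 3) = 0 := by simpa [Fin.sum_univ_four, h41, h42, h43] using hlie (b 3) 2 3
    have e02 : c (0, 2) = 0 := by
      simpa [Fin.sum_univ_four, h41, h42, h43, e12] using hlie (b 3) 0 2
    have e03 : c (0, 3) = 0 := by simpa [Fin.sum_univ_four, h31, h32, h34] using hlie (b 2) 0 2
    have diag (i : Fin 4) : c (i, i) = 0 := self_eq_neg.mp (anti i i)
    refine ⟨c (0, 1), (b.tensorProduct b).ext_elem fun ⟨i, j⟩ => ?_⟩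
    rw [hc]
    fin_cases i <;> fin_cases j <;>
      simp [diag, anti 0 1, anti 0 2, anti 0 3, anti 1 2, anti 1 3, anti 2 3,
        e12, e13, e23, e02, e03]
  · rintro ⟨lam, rfl⟩ v
    have hcentral : ⁅v, b 0⁆ = 0 := by
      rw [← b.sum_repr v]
      simp only [Fin.sum_univ_four, add_lie, smul_lie, lie_self, h21, h31, h41, smul_zero,
        add_zero]
    have hb1 : ⁅v, b 1⁆ ∈ ℝ ∙ b 0 := by
      refine Submodule.mem_span_singleton.mpr ⟨b.repr v 3, ?_⟩
      conv_rhs => rw [← b.sum_repr v]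
      simp only [Fin.sum_univ_four, add_lie, smul_lie, lie_self, h12, h32, h42, smul_zero,
        zero_add, add_zero]
    rw [lie_smul, TensorProduct.LieModule.lie_tmul_sub_tmul_eq_zero hcentral hb1, smul_zero]
end
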